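/- arXiv:0803.1463 — 4 statements merged into one kernel-verified Lean document; each statement's English description precedes it below -/
import Mathlib

section
/- Let |Φ⟩ and |χ⟩ be vectors in a finite-dimensional Hilbert space with |Φ⟩ nonzero. The operator A = |Φ⟩⟨χ| + |χ⟩⟨Φ| is positive semidefinite if and only if |χ⟩ = λ|Φ⟩ for some complex number λ with nonnegative real part. -/
/-!
If `χ = c • Φ`, the operator is `(c + conj c) • |Φ⟩⟨Φ| = 2 Re c • |Φ⟩⟨Φ|`, which is positive
semidefinite exactly when `Re c ≥ 0`. Conversely, write `χ = c • Φ + v` with `v ⊥ Φ`. The quadratic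
form of `A` vanishes at `v`, so positivity forces `A v = ⟨v, v⟩ Φ` to vanish, i.e. `v = 0`.
-/

open Matrix
open scoped ComplexOrder

namespace Matrix

variable {ι 𝕜 : Type*}

lemma vecMulVec_star_smul_add_vecMulVec_smul_star [CommRing 𝕜] [StarRing 𝕜] (a : ι → 𝕜)
    (c : 𝕜) :
    vecMulVec a (star (c • a)) + vecMulVec (c • a) (star a) =
      (c + star c) • vecMulVec a (star a) := by
  ext i j
  simp only [add_apply, smul_apply, vecMulVec_apply, star_smul, Pi.smul_apply, Pi.star_apply,
    smul_eq_mul]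
  ring

variable [Fintype ι] [RCLike 𝕜]

lemma posSemidef_smul_vecMulVec_self_star_iff {a : ι → 𝕜} (ha : a ≠ 0) {r : 𝕜} :
    (r • vecMulVec a (star a)).PosSemidef ↔ 0 ≤ r := by
  refine ⟨fun h ↦ ?_, fun hr ↦ (posSemidef_vecMulVec_self_star a).smul hr⟩
  have hp : 0 < star a ⬝ᵥ a := dotProduct_star_self_pos_iff.2 ha
  have hquad := h.dotProduct_mulVec_nonneg a
  rw [smul_mulVec, vecMulVec_mulVec] at hquad
  simp only [op_smul_eq_smul, dotProduct_smul, smul_eq_mul] at hquad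
  exact le_of_mul_le_mul_right (by simpa using hquad) (mul_pos hp hp)

lemma exists_eq_smul_add_of_dotProduct_eq_zero {a : ι → 𝕜} (ha : a ≠ 0) (b : ι → 𝕜) :
    ∃ (c : 𝕜) (v : ι → 𝕜), b = c • a + v ∧ star a ⬝ᵥ v = 0 := by
  have hp : star a ⬝ᵥ a ≠ 0 := (dotProduct_star_self_pos_iff.2 ha).ne'
  refine ⟨(star a ⬝ᵥ b) / (star a ⬝ᵥ a), _, (add_sub_cancel _ _).symm, ?_⟩
  rw [dotProduct_sub, dotProduct_smul, smul_eq_mul, div_mul_cancel₀ _ hp, sub_self]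

lemma exists_eq_smul_of_posSemidef_vecMulVec_add {a b : ι → 𝕜} (ha : a ≠ 0)
    (h : (vecMulVec a (star b) + vecMulVec b (star a)).PosSemidef) : ∃ c : 𝕜, b = c • a := by
  obtain ⟨c, v, rfl, hv⟩ := exists_eq_smul_add_of_dotProduct_eq_zero ha b
  have hv' : star v ⬝ᵥ a = 0 := by rw [star_dotProduct, hv, star_zero]
  have hbv : star (c • a + v) ⬝ᵥ v = star v ⬝ᵥ v := by
    rw [star_add, add_dotProduct, star_smul, smul_dotProduct, hv, smul_zero, zero_add]
  have hmul : (vecMulVec a (star (c • a + v)) + vecMulVec (c • a + v) (star a)) *ᵥ v =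
      (star v ⬝ᵥ v) • a := by
    rw [add_mulVec, vecMulVec_mulVec, vecMulVec_mulVec, hv, hbv]
    simp
  have hker := (h.dotProduct_mulVec_zero_iff v).1 (by rw [hmul, dotProduct_smul, hv', smul_zero])
  rw [hmul, smul_eq_zero] at hker
  exact ⟨c, by rw [dotProduct_star_self_eq_zero.1 (hker.resolve_right ha), add_zero]⟩

end Matrix

/-- The operator `A = |Φ⟩⟨χ| + |χ⟩⟨Φ|` (with `Φ ≠ 0`) is positive semidefinite iff
`χ = λ Φ` for some complex `λ` with nonnegative real part. -/
theorem rankOne_sum_posSemidef_iff {n : ℕ} (Φ χ : Fin n → ℂ) (hΦ : Φ ≠ 0) :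
    (vecMulVec Φ (star χ) + vecMulVec χ (star Φ)).PosSemidef ↔
      ∃ lam : ℂ, 0 ≤ lam.re ∧ χ = lam • Φ := by
  have hmultiple (c : ℂ) :
      (vecMulVec Φ (star (c • Φ)) + vecMulVec (c • Φ) (star Φ)).PosSemidef ↔ 0 ≤ c.re := by
    rw [vecMulVec_star_smul_add_vecMulVec_smul_star, posSemidef_smul_vecMulVec_self_star_iff hΦ,
      Complex.star_def, Complex.add_conj, Complex.zero_le_real]
    exact mul_nonneg_iff_of_pos_left two_pos
  constructor
  · intro h
    obtain ⟨c, rfl⟩ := exists_eq_smul_of_posSemidef_vecMulVec_add hΦ h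
    exact ⟨c, (hmultiple c).1 h, rfl⟩
  · rintro ⟨c, hc, rfl⟩
    exact (hmultiple c).2 hc
end

section
/- Let L(ρ) = -i[H,ρ] + Σ_ℓ g_ℓ (2 c_ℓ ρ c_ℓ† - c_ℓ† c_ℓ ρ - ρ c_ℓ† c_ℓ) with g_ℓ > 0. For a unit vector |Φ⟩, L(|Φ⟩⟨Φ|) = 0 if and only if (i) Q†|Φ⟩ = λ|Φ⟩ for some λ ∈ ℂ, where Q = Σ_ℓ g_ℓ c_ℓ† c_ℓ - iH, and (ii) each c_ℓ|Φ⟩ = λ_ℓ|Φ⟩ for some λ_ℓ ∈ ℂ with Σ_ℓ g_ℓ |λ_ℓ|² = Re(λ). -/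
open Matrix
open scoped ComplexOrder

/-- The Lindblad generator
`L(ρ) = -i[H,ρ] + ∑_ℓ g_ℓ (2 c_ℓ ρ c_ℓ† - c_ℓ† c_ℓ ρ - ρ c_ℓ† c_ℓ)`. -/
noncomputable def lindblad {n m : ℕ} (H : Matrix (Fin n) (Fin n) ℂ) (g : Fin m → ℝ)
    (c : Fin m → Matrix (Fin n) (Fin n) ℂ) (ρ : Matrix (Fin n) (Fin n) ℂ) :
    Matrix (Fin n) (Fin n) ℂ :=
  -Complex.I • (H * ρ - ρ * H) +
    ∑ l, (g l : ℂ) •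
      (2 • (c l * ρ * (c l)ᴴ) - (c l)ᴴ * c l * ρ - ρ * ((c l)ᴴ * c l))

namespace LindbladAux
variable {n : ℕ}

lemma mul_vmv (A : Matrix (Fin n) (Fin n) ℂ) (u w : Fin n → ℂ) :
    A * vecMulVec u w = vecMulVec (A *ᵥ u) w := by
  ext i j
  simp [Matrix.mul_apply, Matrix.vecMulVec_apply, Matrix.mulVec, dotProduct,
    Finset.sum_mul, mul_assoc]

lemma vmv_mul (A : Matrix (Fin n) (Fin n) ℂ) (u w : Fin n → ℂ) :
    vecMulVec u w * A = vecMulVec u (w ᵥ* A) := by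
  ext i j
  simp [Matrix.mul_apply, Matrix.vecMulVec_apply, Matrix.vecMul, dotProduct,
    Finset.mul_sum, mul_assoc, mul_left_comm, mul_comm]

lemma smul_vmv_left (z : ℂ) (u w : Fin n → ℂ) :
    vecMulVec (z • u) w = z • vecMulVec u w := by
  ext i j; simp [Matrix.vecMulVec_apply, mul_assoc]

lemma smul_vmv_right (z : ℂ) (u w : Fin n → ℂ) :
    vecMulVec u (z • w) = z • vecMulVec u w := by
  ext i j; simp [Matrix.vecMulVec_apply]; ring

lemma add_vmv (u u' w : Fin n → ℂ) :
    vecMulVec (u + u') w = vecMulVec u w + vecMulVec u' w := by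
  ext i j; simp [Matrix.vecMulVec_apply, add_mul]

lemma vmv_add (u w w' : Fin n → ℂ) :
    vecMulVec u (w + w') = vecMulVec u w + vecMulVec u w' := by
  ext i j; simp [Matrix.vecMulVec_apply, mul_add]

lemma sub_vmv (u u' w : Fin n → ℂ) :
    vecMulVec (u - u') w = vecMulVec u w - vecMulVec u' w := by
  ext i j; simp [Matrix.vecMulVec_apply, sub_mul]

lemma vmv_sub (u w w' : Fin n → ℂ) :
    vecMulVec u (w - w') = vecMulVec u w - vecMulVec u w' := by
  ext i j; simp [Matrix.vecMulVec_apply, mul_sub]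

lemma sum_vmv {m : ℕ} (u : Fin m → Fin n → ℂ) (w : Fin n → ℂ) :
    vecMulVec (∑ l, u l) w = ∑ l, vecMulVec (u l) w := by
  ext i j
  simp only [Matrix.vecMulVec_apply, Finset.sum_apply, Matrix.sum_apply, Finset.sum_mul]

lemma vmv_sum {m : ℕ} (u : Fin n → ℂ) (w : Fin m → Fin n → ℂ) :
    vecMulVec u (∑ l, w l) = ∑ l, vecMulVec u (w l) := by
  ext i j
  simp only [Matrix.vecMulVec_apply, Finset.sum_apply, Matrix.sum_apply, Finset.mul_sum]

lemma starVec_vecMul (A : Matrix (Fin n) (Fin n) ℂ) (v : Fin n → ℂ) :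
    star v ᵥ* A = star (Aᴴ *ᵥ v) := by
  rw [Matrix.star_mulVec, Matrix.conjTranspose_conjTranspose]

lemma vmv_mulVec (u w x : Fin n → ℂ) :
    vecMulVec u w *ᵥ x = (w ⬝ᵥ x) • u := by
  ext i; simp [Matrix.mulVec, Matrix.vecMulVec_apply, dotProduct,
    Finset.mul_sum, mul_assoc, mul_comm, mul_left_comm]

lemma sum_mulVec {m : ℕ} (A : Fin m → Matrix (Fin n) (Fin n) ℂ) (x : Fin n → ℂ) :
    (∑ l, A l) *ᵥ x = ∑ l, A l *ᵥ x := by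
  ext i
  simp only [Matrix.mulVec, dotProduct, Matrix.sum_apply, Finset.sum_apply,
    Finset.sum_mul]
  rw [Finset.sum_comm]

lemma dot_sum {m : ℕ} (v : Fin n → ℂ) (u : Fin m → Fin n → ℂ) :
    v ⬝ᵥ (∑ l, u l) = ∑ l, v ⬝ᵥ u l := by
  simp only [dotProduct, Finset.sum_apply, Finset.mul_sum]
  rw [Finset.sum_comm]

lemma sum_dot {m : ℕ} (u : Fin m → Fin n → ℂ) (v : Fin n → ℂ) :
    (∑ l, u l) ⬝ᵥ v = ∑ l, u l ⬝ᵥ v := by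
  simp only [dotProduct, Finset.sum_apply, Finset.sum_mul]
  rw [Finset.sum_comm]

lemma hQ {m : ℕ} (H : Matrix (Fin n) (Fin n) ℂ) (hH : H.IsHermitian)
    (g : Fin m → ℝ) (c : Fin m → Matrix (Fin n) (Fin n) ℂ) (Φ : Fin n → ℂ) :
    ((∑ l, (g l : ℂ) • ((c l)ᴴ * c l)) - Complex.I • H)ᴴ *ᵥ Φ
      = (∑ l, (g l : ℂ) • (((c l)ᴴ * c l) *ᵥ Φ)) + Complex.I • (H *ᵥ Φ) := by
  have h1 : ((∑ l, (g l : ℂ) • ((c l)ᴴ * c l)) - Complex.I • H)ᴴ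
      = (∑ l, (g l : ℂ) • ((c l)ᴴ * c l)) + Complex.I • H := by
    simp [Matrix.conjTranspose_sub, Matrix.conjTranspose_smul, Matrix.conjTranspose_sum,
      Matrix.conjTranspose_mul, hH.eq, Complex.star_def, sub_eq_add_neg]
  have h2 : ∀ (A : Fin m → Matrix (Fin n) (Fin n) ℂ), (∑ l, A l) *ᵥ Φ = ∑ l, A l *ᵥ Φ := by
    intro A
    ext i
    simp only [Matrix.mulVec, dotProduct, Matrix.sum_apply, Finset.sum_apply,
      Finset.sum_mul]
    rw [Finset.sum_comm]
  rw [h1, Matrix.add_mulVec, h2]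
  simp [Matrix.smul_mulVec]

lemma master {m : ℕ} (H : Matrix (Fin n) (Fin n) ℂ) (hH : H.IsHermitian)
    (g : Fin m → ℝ) (c : Fin m → Matrix (Fin n) (Fin n) ℂ) (Φ : Fin n → ℂ) :
    lindblad H g c (vecMulVec Φ (star Φ)) =
      (∑ l, (g l : ℂ) • (2 • vecMulVec (c l *ᵥ Φ) (star (c l *ᵥ Φ))
        - vecMulVec (((c l)ᴴ * c l) *ᵥ Φ) (star Φ)
        - vecMulVec Φ (star (((c l)ᴴ * c l) *ᵥ Φ))))
      - Complex.I • vecMulVec (H *ᵥ Φ) (star Φ)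
      + Complex.I • vecMulVec Φ (star (H *ᵥ Φ)) := by
  unfold lindblad
  simp only [mul_vmv, vmv_mul, starVec_vecMul, Matrix.conjTranspose_conjTranspose,
    Matrix.conjTranspose_mul, hH.eq]
  generalize (∑ l : Fin m, (g l : ℂ) • (2 • vecMulVec (c l *ᵥ Φ) (star (c l *ᵥ Φ))
    - vecMulVec (((c l)ᴴ * c l) *ᵥ Φ) (star Φ)
    - vecMulVec Φ (star (((c l)ᴴ * c l) *ᵥ Φ)))) = S
  module

end LindbladAux

/-- `L(|Φ⟩⟨Φ|) = 0` iff (i) `Q†Φ = λΦ` with `Q = ∑ g_ℓ c_ℓ†c_ℓ - iH`, and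
(ii) each `c_ℓ Φ = λ_ℓ Φ` with `∑ g_ℓ |λ_ℓ|² = Re λ`. -/
theorem pure_stationary_iff {n m : ℕ} (H : Matrix (Fin n) (Fin n) ℂ)
    (hH : H.IsHermitian) (g : Fin m → ℝ) (hg : ∀ l, 0 < g l)
    (c : Fin m → Matrix (Fin n) (Fin n) ℂ)
    (Φ : Fin n → ℂ) (hΦ : star Φ ⬝ᵥ Φ = 1) :
    lindblad H g c (vecMulVec Φ (star Φ)) = 0 ↔
      ∃ lam : ℂ,
        ((∑ l, (g l : ℂ) • ((c l)ᴴ * c l)) - Complex.I • H)ᴴ *ᵥ Φ = lam • Φ ∧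
        ∃ μ : Fin m → ℂ, (∀ l, c l *ᵥ Φ = μ l • Φ) ∧
          ∑ l, g l * Complex.normSq (μ l) = lam.re := by
  open LindbladAux in
  constructor
  · intro h
    set μ : Fin m → ℂ := fun l => star Φ ⬝ᵥ (c l *ᵥ Φ) with hμ
    have hc : ∀ k, c k *ᵥ Φ = μ k • Φ := by
      intro k
      set w : Fin n → ℂ := c k *ᵥ Φ - μ k • Φ with hw
      have hΦw : star Φ ⬝ᵥ w = 0 := by
        simp only [hw, dotProduct_sub, dotProduct_smul, hΦ, smul_eq_mul, mul_one, hμ, sub_self]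
      have hwΦ : star w ⬝ᵥ Φ = 0 := by
        rw [Matrix.star_dotProduct, hΦw, star_zero]
      have h0 : star w ⬝ᵥ (lindblad H g c (vecMulVec Φ (star Φ)) *ᵥ w) = 0 := by
        rw [h]; simp
      rw [LindbladAux.master H hH g c Φ] at h0
      simp only [Matrix.sub_mulVec, Matrix.add_mulVec, Matrix.smul_mulVec,
        LindbladAux.sum_mulVec, LindbladAux.vmv_mulVec, smul_mulVec,
        dotProduct_sub, dotProduct_add, dotProduct_smul,
        hΦw, zero_smul, smul_zero, mul_zero, zero_mul, sub_zero, zero_sub, add_zero, zero_add,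
        hwΦ, smul_eq_mul, Finset.sum_sub_distrib, LindbladAux.dot_sum] at h0
      have h0' : ∑ x, (((2 * g x * Complex.normSq (star w ⬝ᵥ c x *ᵥ Φ) : ℝ)) : ℂ) = 0 := by
        rw [← h0]
        refine Finset.sum_congr rfl fun x _ => ?_
        rw [Matrix.star_dotProduct (c x *ᵥ Φ) w, Complex.star_def,
          ← Complex.normSq_eq_conj_mul_self]
        push_cast
        ring
      have h0'' : ∑ x, 2 * g x * Complex.normSq (star w ⬝ᵥ c x *ᵥ Φ) = 0 := by
        exact_mod_cast h0'
      have hz : star w ⬝ᵥ c k *ᵥ Φ = 0 := by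
        have hterm := (Finset.sum_eq_zero_iff_of_nonneg (fun x _ =>
          mul_nonneg (mul_nonneg (by norm_num) (hg x).le)
            (Complex.normSq_nonneg _))).mp h0'' k (Finset.mem_univ k)
        have h2 : Complex.normSq (star w ⬝ᵥ c k *ᵥ Φ) = 0 := by
          rcases mul_eq_zero.mp hterm with h'|h'
          · nlinarith [hg k]
          · exact h'
        exact Complex.normSq_eq_zero.mp h2
      have hww : star w ⬝ᵥ w = 0 := by
        have hck : c k *ᵥ Φ = w + μ k • Φ := by rw [hw]; abel
        rw [hck, dotProduct_add, dotProduct_smul, hwΦ, smul_zero, add_zero] at hz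
        exact hz
      have hw0 : w = 0 := dotProduct_star_self_eq_zero.mp hww
      have := sub_eq_zero.mp (hw ▸ hw0)
      exact this
    have h1 : lindblad H g c (vecMulVec Φ (star Φ)) *ᵥ Φ = 0 := by rw [h]; simp
    rw [LindbladAux.master H hH g c Φ] at h1
    simp only [Matrix.sub_mulVec, Matrix.add_mulVec, Matrix.smul_mulVec,
      LindbladAux.sum_mulVec, LindbladAux.vmv_mulVec, hc, star_smul,
      smul_dotProduct, dotProduct_smul, hΦ, smul_eq_mul, mul_one,
      one_smul] at h1
    have e : ∀ x : Fin m, (g x:ℂ) • (2 • star (μ x) • μ x • Φ - ((c x)ᴴ * c x) *ᵥ Φ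
          - (star (((c x)ᴴ * c x) *ᵥ Φ) ⬝ᵥ Φ) • Φ)
        = ((g x:ℂ) * (2 * star (μ x) * μ x - star (((c x)ᴴ * c x) *ᵥ Φ) ⬝ᵥ Φ)) • Φ
          - (g x:ℂ) • (((c x)ᴴ * c x) *ᵥ Φ) := fun x => by module
    rw [Finset.sum_congr rfl (fun x _ => e x), Finset.sum_sub_distrib,
      ← Finset.sum_smul] at h1
    set t : ℂ := (∑ x, (g x:ℂ) * (2 * star (μ x) * μ x
        - star (((c x)ᴴ * c x) *ᵥ Φ) ⬝ᵥ Φ)) + Complex.I * (star (H *ᵥ Φ) ⬝ᵥ Φ) with ht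
    have hA : (∑ x, (g x:ℂ) • (((c x)ᴴ * c x) *ᵥ Φ)) + Complex.I • (H *ᵥ Φ) = t • Φ := by
      rw [ht]
      linear_combination (norm := module) -h1
    have hv : ((∑ l, (g l : ℂ) • ((c l)ᴴ * c l)) - Complex.I • H)ᴴ *ᵥ Φ = t • Φ := by
      rw [LindbladAux.hQ H hH g c Φ]; exact hA
    have hconj : (starRingEnd ℂ) t
        = ∑ x, (g x:ℂ) * (star (((c x)ᴴ * c x) *ᵥ Φ) ⬝ᵥ Φ)
          - Complex.I * (star (H *ᵥ Φ) ⬝ᵥ Φ) := by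
      have h3 : star (((∑ l, (g l : ℂ) • ((c l)ᴴ * c l)) - Complex.I • H)ᴴ *ᵥ Φ) ⬝ᵥ Φ
          = (starRingEnd ℂ) t := by
        rw [hv, star_smul, smul_dotProduct, hΦ, smul_eq_mul, mul_one,
          Complex.star_def]
      rw [← h3, LindbladAux.hQ H hH g c Φ, star_add, add_dotProduct, star_sum,
        LindbladAux.sum_dot]
      have e2 : ∀ x : Fin m, star ((g x:ℂ) • (((c x)ᴴ * c x) *ᵥ Φ)) ⬝ᵥ Φ
          = (g x:ℂ) * (star (((c x)ᴴ * c x) *ᵥ Φ) ⬝ᵥ Φ) := fun x => by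
        rw [star_smul, smul_dotProduct]
        simp [Complex.star_def, Complex.conj_ofReal]
      rw [Finset.sum_congr rfl fun x _ => e2 x, star_smul, smul_dotProduct]
      simp only [Complex.star_def, Complex.conj_I, smul_eq_mul]
      ring
    have hre : ∑ l, g l * Complex.normSq (μ l) = t.re := by
      have hct : t + (starRingEnd ℂ) t
          = ((2 * ∑ x, g x * Complex.normSq (μ x) : ℝ) : ℂ) := by
        rw [hconj, ht]
        have e3 : ∀ x : Fin m, ((g x:ℂ) * (2 * star (μ x) * μ x
              - star (((c x)ᴴ * c x) *ᵥ Φ) ⬝ᵥ Φ))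
              + ((g x:ℂ) * (star (((c x)ᴴ * c x) *ᵥ Φ) ⬝ᵥ Φ))
            = 2 * (g x:ℂ) * ((Complex.normSq (μ x) : ℝ) : ℂ) := fun x => by
          rw [Complex.normSq_eq_conj_mul_self, Complex.star_def]; ring
        rw [show ∀ a b i : ℂ, (a + i) + (b - i) = a + b from fun a b i => by ring]
        rw [← Finset.sum_add_distrib, Finset.sum_congr rfl fun x _ => e3 x]
        push_cast [Finset.mul_sum]
        exact Finset.sum_congr rfl fun x _ => by ring
      have h4 : ((2 * t.re : ℝ) : ℂ) = ((2 * ∑ x, g x * Complex.normSq (μ x) : ℝ) : ℂ) := by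
        rw [← hct, Complex.add_conj]
      have h5 := Complex.ofReal_injective h4
      linarith
    exact ⟨t, hv, μ, hc, hre⟩
  · rintro ⟨lam, hv, μ, hc, hsum⟩
    rw [LindbladAux.master H hH g c Φ]
    have hA : (∑ x, (g x:ℂ) • (((c x)ᴴ * c x) *ᵥ Φ)) = lam • Φ - Complex.I • (H *ᵥ Φ) := by
      have h2 := (LindbladAux.hQ H hH g c Φ).symm.trans hv
      linear_combination (norm := module) h2
    have e : ∀ l : Fin m, (g l:ℂ) • (2 • vecMulVec (c l *ᵥ Φ) (star (c l *ᵥ Φ))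
          - vecMulVec (((c l)ᴴ * c l) *ᵥ Φ) (star Φ)
          - vecMulVec Φ (star (((c l)ᴴ * c l) *ᵥ Φ)))
        = ((2 * g l * Complex.normSq (μ l) : ℝ) : ℂ) • vecMulVec Φ (star Φ)
          - vecMulVec ((g l:ℂ) • (((c l)ᴴ * c l) *ᵥ Φ)) (star Φ)
          - vecMulVec Φ (star ((g l:ℂ) • (((c l)ᴴ * c l) *ᵥ Φ))) := by
      intro l
      rw [hc l]
      have hns : ((2 * g l * Complex.normSq (μ l) : ℝ) : ℂ)
          = 2 * (g l:ℂ) * ((starRingEnd ℂ) (μ l) * μ l) := by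
        push_cast [Complex.normSq_eq_conj_mul_self]; ring
      rw [hns, star_smul, star_smul]
      simp only [LindbladAux.smul_vmv_left, LindbladAux.smul_vmv_right, Complex.star_def,
        Complex.conj_ofReal]
      module
    rw [Finset.sum_congr rfl fun l _ => e l, Finset.sum_sub_distrib, Finset.sum_sub_distrib,
      ← Finset.sum_smul, ← LindbladAux.sum_vmv, ← LindbladAux.vmv_sum, ← star_sum, hA]
    have hs2 : (∑ l, ((2 * g l * Complex.normSq (μ l) : ℝ) : ℂ))
        = lam + (starRingEnd ℂ) lam := by
      rw [Complex.add_conj, ← hsum]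
      push_cast [Finset.mul_sum]
      exact Finset.sum_congr rfl fun l _ => by ring
    rw [hs2, LindbladAux.sub_vmv, star_sub, star_smul, star_smul, LindbladAux.vmv_sub]
    simp only [LindbladAux.smul_vmv_left, LindbladAux.smul_vmv_right, Complex.star_def,
      Complex.conj_I]
    module
end

section
/- Consider a purely dissipative Lindblad generator (H = 0) with dark-state subspace D = ∩_ℓ ker(c_ℓ). If there is no nonzero subspace S orthogonal to D that is invariant under every jump operator (i.e., c_ℓ S ⊆ S for all ℓ), then every stationary density operator ρ (L(ρ) = 0) has range contained in D. -/
open Matrix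
open scoped ComplexOrder

/-- The purely dissipative Lindblad generator. -/
noncomputable def dissipator {n m : ℕ} (g : Fin m → ℝ)
    (c : Fin m → Matrix (Fin n) (Fin n) ℂ) (ρ : Matrix (Fin n) (Fin n) ℂ) :
    Matrix (Fin n) (Fin n) ℂ :=
  ∑ l, (g l : ℂ) •
    (2 • (c l * ρ * (c l)ᴴ) - (c l)ᴴ * c l * ρ - ρ * ((c l)ᴴ * c l))

/-! If `w ∈ ker ρ` or `w ∈ D`, pairing `L(ρ) = 0` with `w` kills the terms coming from
`c_ℓ† c_ℓ ρ` and `ρ c_ℓ† c_ℓ`, leaving `∑ g_ℓ ⟨c_ℓ† w, ρ c_ℓ† w⟩ = 0`; by positivity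
`ρ c_ℓ† w = 0`. So the orthogonal complement `S` of `ker ρ ∪ D` is orthogonal to `D` and
invariant under every `c_ℓ` (as `c_ℓ†` maps `ker ρ ∪ D` into `ker ρ`), hence `S = 0`.
But `c_ℓ ρ v ∈ S`, because `⟨w, c_ℓ ρ v⟩ = ⟨ρ c_ℓ† w, v⟩ = 0` for `w ∈ ker ρ ∪ D`. -/

section OrthogonalOf

variable {ι R : Type*} [Fintype ι] [CommSemiring R] [StarRing R]

theorem star_dotProduct_mulVec_eq (M : Matrix ι ι R) (w v : ι → R) :
    star w ⬝ᵥ (M *ᵥ v) = star (Mᴴ *ᵥ w) ⬝ᵥ v := by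
  rw [star_mulVec, conjTranspose_conjTranspose, dotProduct_mulVec]

def orthogonalOf (P : (ι → R) → Prop) : Submodule R (ι → R) where
  carrier := {v | ∀ w, P w → star w ⬝ᵥ v = 0}
  add_mem' hu hv w hw := by rw [dotProduct_add, hu w hw, hv w hw, add_zero]
  zero_mem' _ _ := dotProduct_zero _
  smul_mem' a v hv w hw := by rw [dotProduct_smul, hv w hw, smul_zero]

theorem mulVec_mem_orthogonalOf {P : (ι → R) → Prop} {M : Matrix ι ι R}
    (hM : ∀ w, P w → P (Mᴴ *ᵥ w)) {v : ι → R} (hv : v ∈ orthogonalOf P) :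
    M *ᵥ v ∈ orthogonalOf P := fun w hw => by
  rw [star_dotProduct_mulVec_eq]
  exact hv _ (hM w hw)

theorem mulVec_mem_orthogonalOf_of_conjTranspose {P : (ι → R) → Prop} {M : Matrix ι ι R}
    (hM : ∀ w, P w → Mᴴ *ᵥ w = 0) (v : ι → R) : M *ᵥ v ∈ orthogonalOf P := fun w hw => by
  rw [star_dotProduct_mulVec_eq, hM w hw, star_zero, zero_dotProduct]

end OrthogonalOf

theorem star_dotProduct_dissipator_mulVec {n m : ℕ} (g : Fin m → ℝ)
    (c : Fin m → Matrix (Fin n) (Fin n) ℂ) (ρ : Matrix (Fin n) (Fin n) ℂ) (w : Fin n → ℂ) :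
    star w ⬝ᵥ (dissipator g c ρ *ᵥ w) =
      ∑ l, (g l : ℂ) * (2 * (star ((c l)ᴴ *ᵥ w) ⬝ᵥ (ρ *ᵥ ((c l)ᴴ *ᵥ w)))
        - star (c l *ᵥ w) ⬝ᵥ (c l *ᵥ (ρ *ᵥ w)) - star (c l *ᵥ (ρᴴ *ᵥ w)) ⬝ᵥ (c l *ᵥ w)) := by
  simp only [dissipator, sum_mulVec, dotProduct_sum, smul_mulVec, dotProduct_smul, sub_mulVec,
    dotProduct_sub, smul_eq_mul, ← mulVec_mulVec]
  refine Finset.sum_congr rfl fun l _ => ?_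
  rw [star_dotProduct_mulVec_eq (c l) w, star_dotProduct_mulVec_eq (c l)ᴴ w,
    star_dotProduct_mulVec_eq ρ w, star_dotProduct_mulVec_eq (c l)ᴴ (ρᴴ *ᵥ w),
    conjTranspose_conjTranspose]
  ring

theorem stationary_mulVec_conjTranspose_eq_zero {n m : ℕ} {g : Fin m → ℝ} (hg : ∀ l, 0 < g l)
    {c : Fin m → Matrix (Fin n) (Fin n) ℂ} {ρ : Matrix (Fin n) (Fin n) ℂ} (hρ : ρ.PosSemidef)
    (hst : dissipator g c ρ = 0) {w : Fin n → ℂ} (hw : ρ *ᵥ w = 0 ∨ ∀ l, c l *ᵥ w = 0)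
    (l : Fin m) : ρ *ᵥ ((c l)ᴴ *ᵥ w) = 0 := by
  have hcross₁ : ∀ l, star (c l *ᵥ w) ⬝ᵥ (c l *ᵥ (ρ *ᵥ w)) = 0 := fun l => by
    rcases hw with hker | hdark
    · rw [hker, mulVec_zero, dotProduct_zero]
    · rw [hdark l, star_zero, zero_dotProduct]
  have hcross₂ : ∀ l, star (c l *ᵥ (ρᴴ *ᵥ w)) ⬝ᵥ (c l *ᵥ w) = 0 := fun l => by
    rcases hw with hker | hdark
    · rw [hρ.isHermitian.eq, hker, mulVec_zero, star_zero, zero_dotProduct]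
    · rw [hdark l, dotProduct_zero]
  have hsum : ∑ l, (g l : ℂ) * (2 * (star ((c l)ᴴ *ᵥ w) ⬝ᵥ (ρ *ᵥ ((c l)ᴴ *ᵥ w)))) = 0 := by
    have h := star_dotProduct_dissipator_mulVec g c ρ w
    rw [hst, zero_mulVec, dotProduct_zero] at h
    simpa only [hcross₁, hcross₂, sub_zero] using h.symm
  have hnonneg : ∀ l ∈ Finset.univ,
      0 ≤ (g l : ℂ) * (2 * (star ((c l)ᴴ *ᵥ w) ⬝ᵥ (ρ *ᵥ ((c l)ᴴ *ᵥ w)))) := fun l _ =>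
    mul_nonneg (Complex.zero_le_real.mpr (hg l).le)
      (mul_nonneg zero_le_two (hρ.dotProduct_mulVec_nonneg _))
  have hterm := (Finset.sum_eq_zero_iff_of_nonneg hnonneg).mp hsum l (Finset.mem_univ l)
  refine (hρ.dotProduct_mulVec_zero_iff _).mp ?_
  simpa [(hg l).ne'] using hterm

theorem stationary_range_subset_dark_general {n m : ℕ} (g : Fin m → ℝ) (hg : ∀ l, 0 < g l)
    (c : Fin m → Matrix (Fin n) (Fin n) ℂ)
    (hno : ¬ ∃ S : Submodule ℂ (Fin n → ℂ), S ≠ ⊥ ∧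
        (∀ v ∈ S, ∀ w : Fin n → ℂ, (∀ l, c l *ᵥ w = 0) → star w ⬝ᵥ v = 0) ∧
        (∀ l, ∀ v ∈ S, c l *ᵥ v ∈ S))
    (ρ : Matrix (Fin n) (Fin n) ℂ) (hρ : ρ.PosSemidef)
    (hst : dissipator g c ρ = 0) :
    ∀ v : Fin n → ℂ, ∀ l, c l *ᵥ (ρ *ᵥ v) = 0 := by
  set P : (Fin n → ℂ) → Prop := fun w => ρ *ᵥ w = 0 ∨ ∀ l, c l *ᵥ w = 0
  have hρc : ∀ l w, P w → ρ *ᵥ ((c l)ᴴ *ᵥ w) = 0 := fun l _ hw =>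
    stationary_mulVec_conjTranspose_eq_zero hg hρ hst hw l
  have hbot : orthogonalOf P = ⊥ := by
    by_contra hne
    exact hno ⟨orthogonalOf P, hne, fun v hv w hw => hv w (Or.inr hw),
      fun l v hv => mulVec_mem_orthogonalOf (fun w hw => Or.inl (hρc l w hw)) hv⟩
  intro v l
  have hmem : (c l * ρ) *ᵥ v ∈ orthogonalOf P :=
    mulVec_mem_orthogonalOf_of_conjTranspose (fun w hw => by
      rw [conjTranspose_mul, hρ.isHermitian.eq, ← mulVec_mulVec, hρc l w hw]) v
  rwa [hbot, Submodule.mem_bot, ← mulVec_mulVec] at hmem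

/-- If there is no nonzero subspace `S`, orthogonal to the dark-state space
`D = ∩_ℓ ker c_ℓ`, that is invariant under every jump operator, then every stationary
density operator has range contained in `D`. -/
theorem stationary_range_subset_dark {n m : ℕ} (g : Fin m → ℝ) (hg : ∀ l, 0 < g l)
    (c : Fin m → Matrix (Fin n) (Fin n) ℂ)
    (hno : ¬ ∃ S : Submodule ℂ (Fin n → ℂ), S ≠ ⊥ ∧
        (∀ v ∈ S, ∀ w : Fin n → ℂ, (∀ l, c l *ᵥ w = 0) → star w ⬝ᵥ v = 0) ∧
        (∀ l, ∀ v ∈ S, c l *ᵥ v ∈ S))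
    (ρ : Matrix (Fin n) (Fin n) ℂ) (hρ : ρ.PosSemidef) (hρ1 : ρ.trace = 1)
    (hst : dissipator g c ρ = 0) :
    ∀ v : Fin n → ℂ, ∀ l, c l *ᵥ (ρ *ᵥ v) = 0 :=
  stationary_range_subset_dark_general g hg c hno ρ hρ hst
end

section
/- With c_k = ½(𝟙 + U_k) Z_k for graph-state stabilizer generators U_k, each c_k satisfies c_k = U σ₋^{(k)} U†, where U is the unitary mapping the computational basis state |i_1,…,i_n⟩ to the graph-basis state |Ψ_{i_1,…,i_n}⟩ = Z_1^{i_1}⋯Z_n^{i_n}|Ψ_{0,…,0}⟩ and σ₋^{(k)} is the lowering operator on qubit k. -/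
open Matrix

/-- Pauli `Z` on qubit `k`. -/
def Zop (n : ℕ) (k : Fin n) : Matrix (Fin n → Fin 2) (Fin n → Fin 2) ℂ :=
  fun s t => if s = t then (if s k = 0 then 1 else -1) else 0

/-- Pauli `X` on qubit `k`: flips bit `k`. -/
def Xop (n : ℕ) (k : Fin n) : Matrix (Fin n → Fin 2) (Fin n → Fin 2) ℂ :=
  fun s t => if t = Function.update s k (if s k = 0 then 1 else 0) then 1 else 0

/-- The diagonal `Z`-product over the neighborhood `N k`. -/
def ZNop (n : ℕ) (N : Fin n → Finset (Fin n)) (k : Fin n) :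
    Matrix (Fin n → Fin 2) (Fin n → Fin 2) ℂ :=
  fun s t => if s = t then ∏ b ∈ N k, (if s b = 0 then (1 : ℂ) else -1) else 0

/-- Graph-state stabilizer generator `U_k = X_k ∏_{b ∈ N_k} Z_b`. -/
noncomputable def stabGen (n : ℕ) (N : Fin n → Finset (Fin n)) (k : Fin n) :
    Matrix (Fin n → Fin 2) (Fin n → Fin 2) ℂ :=
  Xop n k * ZNop n N k

/-- The lowering operator `σ₋^{(k)}` on qubit `k`. -/
def lowerOp (n : ℕ) (k : Fin n) : Matrix (Fin n → Fin 2) (Fin n → Fin 2) ℂ :=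
  fun s t => if s k = 0 ∧ t = Function.update s k 1 then 1 else 0

/-- The sign `⟨s|Z_1^{t_1}⋯Z_n^{t_n}|s⟩ = (-1)^{∑_k s_k t_k}`. -/
def graphSign (n : ℕ) (s t : Fin n → Fin 2) : ℂ :=
  ∏ k, if s k = 1 ∧ t k = 1 then -1 else 1

/-- The graph-basis vector `|Ψ_t⟩ = Z_1^{t_1}⋯Z_n^{t_n}|Ψ_{0…0}⟩`. -/
noncomputable def graphVec (n : ℕ) (Ψ0 : (Fin n → Fin 2) → ℂ) (t : Fin n → Fin 2) :
    (Fin n → Fin 2) → ℂ :=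
  fun s => graphSign n s t * Ψ0 s

/-- The unitary mapping the computational basis state `|t⟩` to the graph-basis state
`|Ψ_t⟩` (its `t`-th column is `graphVec n Ψ0 t`). -/
noncomputable def graphU (n : ℕ) (Ψ0 : (Fin n → Fin 2) → ℂ) :
    Matrix (Fin n → Fin 2) (Fin n → Fin 2) ℂ :=
  fun s t => graphVec n Ψ0 t s

lemma fin2c (x : Fin 2) : x = 0 ∨ x = 1 := by revert x; decide

lemma Z_graphVec (n : ℕ) (Ψ0 : (Fin n → Fin 2) → ℂ) (k : Fin n) (t : Fin n → Fin 2) :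
    Zop n k *ᵥ graphVec n Ψ0 t =
      graphVec n Ψ0 (Function.update t k (if t k = 0 then 1 else 0)) := by
  funext s
  have hsum : (Zop n k *ᵥ graphVec n Ψ0 t) s
      = (if s k = 0 then 1 else -1) * graphVec n Ψ0 t s := by
    simp [Matrix.mulVec, dotProduct, Zop, ite_mul, Finset.sum_ite_eq]
  rw [hsum]
  unfold graphVec graphSign
  rw [← mul_assoc]
  congr 1
  rw [← Finset.mul_prod_erase Finset.univ _ (Finset.mem_univ k),
      ← Finset.mul_prod_erase Finset.univ
        (fun j => if s j = 1 ∧ Function.update t k (if t k = 0 then 1 else 0) j = 1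
          then (-1:ℂ) else 1) (Finset.mem_univ k), ← mul_assoc]
  congr 1
  · rcases fin2c (s k) with h | h <;> rcases fin2c (t k) with h' | h' <;>
      simp [h, h', Function.update_self]
  · exact Finset.prod_congr rfl fun j hj => by
      simp [Function.update_of_ne (Finset.ne_of_mem_erase hj)]

lemma A_vec (n : ℕ) (N : Fin n → Finset (Fin n)) (Ψ0 : (Fin n → Fin 2) → ℂ)
    (heig : ∀ (t : Fin n → Fin 2) (k : Fin n),
      stabGen n N k *ᵥ graphVec n Ψ0 t =
        (if t k = 0 then (1 : ℂ) else -1) • graphVec n Ψ0 t)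
    (k : Fin n) (t : Fin n → Fin 2) :
    ((1 / 2 : ℂ) • ((1 + stabGen n N k) * Zop n k)) *ᵥ graphVec n Ψ0 t =
      if t k = 1 then graphVec n Ψ0 (Function.update t k 0) else 0 := by
  rw [Matrix.smul_mulVec, add_mul, one_mul, Matrix.add_mulVec,
      ← Matrix.mulVec_mulVec, Z_graphVec, heig, Function.update_self]
  rcases fin2c (t k) with h | h
  · simp only [h, if_pos rfl]
    norm_num
  · simp only [h, if_neg (by decide : ¬ ((1:Fin 2) = 0)), if_pos rfl]
    norm_num
    module

lemma Ulower_apply (n : ℕ) (Ψ0 : (Fin n → Fin 2) → ℂ) (k : Fin n)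
    (s t : Fin n → Fin 2) :
    (graphU n Ψ0 * lowerOp n k) s t =
      if t k = 1 then graphVec n Ψ0 (Function.update t k 0) s else 0 := by
  rw [Matrix.mul_apply]
  rcases fin2c (t k) with h | h
  · rw [if_neg (by simp [h])]
    refine Finset.sum_eq_zero fun r _ => ?_
    unfold lowerOp
    rw [if_neg, mul_zero]
    rintro ⟨h0, ht⟩
    rw [ht, Function.update_self] at h
    exact absurd h (by decide)
  · rw [if_pos h]
    have hiff : ∀ r : Fin n → Fin 2,
        (r k = 0 ∧ t = Function.update r k 1) ↔ r = Function.update t k 0 := by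
      intro r
      constructor
      · rintro ⟨h0, ht⟩
        funext j
        rcases eq_or_ne j k with rfl | hj
        · simp [h0]
        · rw [Function.update_of_ne hj]
          rw [ht, Function.update_of_ne hj]
      · rintro rfl
        refine ⟨Function.update_self .., ?_⟩
        funext j
        rcases eq_or_ne j k with rfl | hj
        · simp [h]
        · rw [Function.update_of_ne hj, Function.update_of_ne hj]
    calc ∑ r, graphU n Ψ0 s r * lowerOp n k r t
        = ∑ r, if r = Function.update t k 0 then graphVec n Ψ0 r s else 0 := by
          refine Finset.sum_congr rfl fun r _ => ?_
          unfold lowerOp graphU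
          by_cases hr : r = Function.update t k 0
          · rw [if_pos ((hiff r).mpr hr), if_pos hr, mul_one]
          · rw [if_neg (fun hc => hr ((hiff r).mp hc)), if_neg hr, mul_zero]
      _ = graphVec n Ψ0 (Function.update t k 0) s := by
          rw [Finset.sum_ite_eq' Finset.univ]
          simp

/-- `c_k = ½(𝟙 + U_k) Z_k` equals `U σ₋^{(k)} U†`, where `U` maps the computational
basis to the graph basis satisfying `U_k|Ψ_t⟩ = (-1)^{t_k}|Ψ_t⟩`. -/
theorem jump_eq_conjugated_lowering (n : ℕ) (N : Fin n → Finset (Fin n))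
    (Ψ0 : (Fin n → Fin 2) → ℂ)
    (hU : graphU n Ψ0 ∈ Matrix.unitaryGroup (Fin n → Fin 2) ℂ)
    (heig : ∀ (t : Fin n → Fin 2) (k : Fin n),
      stabGen n N k *ᵥ graphVec n Ψ0 t =
        (if t k = 0 then (1 : ℂ) else -1) • graphVec n Ψ0 t) :
    ∀ k : Fin n,
      (1 / 2 : ℂ) • ((1 + stabGen n N k) * Zop n k) =
        graphU n Ψ0 * lowerOp n k * (graphU n Ψ0)ᴴ := by
  intro k
  set A := (1 / 2 : ℂ) • ((1 + stabGen n N k) * Zop n k) with hA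
  have hcol : A * graphU n Ψ0 = graphU n Ψ0 * lowerOp n k := by
    ext s t
    rw [Ulower_apply]
    have h1 : (A * graphU n Ψ0) s t = (A *ᵥ graphVec n Ψ0 t) s := by
      simp [Matrix.mul_apply, Matrix.mulVec, dotProduct, graphU]
    rw [h1, A_vec n N Ψ0 heig k t]
    by_cases h : t k = 1 <;> simp [h]
  have hUU : graphU n Ψ0 * (graphU n Ψ0)ᴴ = 1 := by
    have := Matrix.mem_unitaryGroup_iff.mp hU
    rwa [Matrix.star_eq_conjTranspose] at this
  calc A = A * (graphU n Ψ0 * (graphU n Ψ0)ᴴ) := by rw [hUU, mul_one]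
    _ = (A * graphU n Ψ0) * (graphU n Ψ0)ᴴ := by rw [mul_assoc]
    _ = graphU n Ψ0 * lowerOp n k * (graphU n Ψ0)ᴴ := by rw [hcol]
end
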